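/- Let z₁ = e₁, z₂ = e₂, z₃ = (1/2)e₁ + (1/2)e₂, z₁* = e₁* − e₂*, z₂* = e₂*, z₃* = e₁* + e₂* in ℓ₁² × ℓ_∞². Then ‖z_j‖₁ = ‖z_j*‖_∞ = z_j*(z_j) = 1 for all j, the frame operator of (z_j, z_j*) is not a scalar multiple of the identity, and Σ_{j,k=1}^3 |z_j*(z_k) z_k*(z_j)| = 4, which is strictly less than the value 9/2 of the same expression for the FUNTF x₁ = e₁, x₂ = (1/4)e₁ − (3/4)e₂, x₃ = (1/4)e₁ + (3/4)e₂ with x₁* = e₁*, x₂* = e₁* − e₂*, x₃* = e₁* + e₂*. -/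

import Mathlib

open scoped BigOperators

/-- `ℓ₁²`: `ℝ²` with the `ℓ₁` norm. -/
noncomputable abbrev L1two := PiLp 1 (fun _ : Fin 2 => ℝ)
/-- `ℓ_∞²`: `ℝ²` with the sup norm (the dual of `ℓ₁²`). -/
noncomputable abbrev Linftwo := PiLp ⊤ (fun _ : Fin 2 => ℝ)

/-- The duality pairing between `ℓ_∞²` and `ℓ₁²`. -/
noncomputable def pair2 (f : Linftwo) (v : L1two) : ℝ :=
  ∑ i, (WithLp.equiv ⊤ (Fin 2 → ℝ) f) i * (WithLp.equiv 1 (Fin 2 → ℝ) v) i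

noncomputable def zv : Fin 3 → L1two := fun j =>
  (WithLp.equiv 1 (Fin 2 → ℝ)).symm
    (![![1, 0], ![0, 1], ![1/2, 1/2]] j)

noncomputable def zf : Fin 3 → Linftwo := fun j =>
  (WithLp.equiv ⊤ (Fin 2 → ℝ)).symm
    (![![1, -1], ![0, 1], ![1, 1]] j)

noncomputable def xv : Fin 3 → L1two := fun j =>
  (WithLp.equiv 1 (Fin 2 → ℝ)).symm
    (![![1, 0], ![1/4, -(3/4)], ![1/4, 3/4]] j)

noncomputable def xf : Fin 3 → Linftwo := fun j =>
  (WithLp.equiv ⊤ (Fin 2 → ℝ)).symm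
    (![![1, 0], ![1, -1], ![1, 1]] j)

/-!
Everything is a computation in coordinates. For `z`, the only nonzero off-diagonal products
`z_j^*(z_k) z_k^*(z_j)` are those with `{j, k} = {2, 3}`, each `1/2`, so the potential is
`3 + 2 • (1/2) = 4`; for `x` all six off-diagonal products equal `1/4`, giving `3 + 6 • (1/4) = 9/2`.
The frame operator of `z` sends `e₁` to `(3/2, 1/2)`, which is not a multiple of `e₁`.
-/

lemma L1two_norm_eq (v : L1two) : ‖v‖ = |v 0| + |v 1| := by
  simp [PiLp.norm_eq_of_L1, Fin.sum_univ_two]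

lemma Linftwo_norm_eq (f : Linftwo) : ‖f‖ = max |f 0| |f 1| := by
  rw [← PiLp.norm_ofLp, Pi.norm_def]
  simp [Fin.univ_succ]

lemma pair2_eq (f : Linftwo) (v : L1two) : pair2 f v = f 0 * v 0 + f 1 * v 1 := by
  simp [pair2, Fin.sum_univ_two]

@[simp] lemma zv_apply (j : Fin 3) (i : Fin 2) : zv j i = ![![1, 0], ![0, 1], ![1/2, 1/2]] j i := rfl
@[simp] lemma zf_apply (j : Fin 3) (i : Fin 2) : zf j i = ![![1, -1], ![0, 1], ![1, 1]] j i := rfl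
@[simp] lemma xv_apply (j : Fin 3) (i : Fin 2) :
    xv j i = ![![1, 0], ![1/4, -(3/4)], ![1/4, 3/4]] j i := rfl
@[simp] lemma xf_apply (j : Fin 3) (i : Fin 2) : xf j i = ![![1, 0], ![1, -1], ![1, 1]] j i := rfl

lemma pair2_zf_zv (j k : Fin 3) :
    pair2 (zf j) (zv k) = !![1, -1, 0; 0, 1, 1/2; 1, 1, 1] j k := by
  fin_cases j <;> fin_cases k <;> norm_num [pair2_eq]

lemma pair2_xf_xv (j k : Fin 3) :
    pair2 (xf j) (xv k) = !![1, 1/4, 1/4; 1, 1, -1/2; 1, -1/2, 1] j k := by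
  fin_cases j <;> fin_cases k <;> norm_num [pair2_eq]

lemma norm_zv (j : Fin 3) : ‖zv j‖ = 1 := by
  fin_cases j <;> norm_num [L1two_norm_eq]

lemma norm_zf (j : Fin 3) : ‖zf j‖ = 1 := by
  fin_cases j <;> norm_num [Linftwo_norm_eq]

lemma not_exists_sum_pair2_zf_smul_zv_eq_smul :
    ¬ ∃ c : ℝ, ∀ v : L1two, ∑ j, pair2 (zf j) v • zv j = c • v := by
  rintro ⟨c, hc⟩
  have h := congrArg (fun w : L1two => w 1) (hc (WithLp.toLp 1 ![1, 0]))
  simp [pair2_eq, Fin.sum_univ_three] at h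

lemma sum_abs_pair2_zf_zv : ∑ j, ∑ k, |pair2 (zf j) (zv k) * pair2 (zf k) (zv j)| = 4 := by
  simp only [pair2_zf_zv, Fin.sum_univ_three, Matrix.of_apply, Matrix.cons_val', Matrix.cons_val]
  norm_num

lemma sum_abs_pair2_xf_xv : ∑ j, ∑ k, |pair2 (xf j) (xv k) * pair2 (xf k) (xv j)| = 9/2 := by
  simp only [pair2_xf_xv, Fin.sum_univ_three, Matrix.of_apply, Matrix.cons_val', Matrix.cons_val]
  norm_num

/-- The alternative frame potential `∑ |x_j^*(x_k) x_k^*(x_j)|` does not characterize FUNTFs: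
`(z_j, z_j^*)` is unit norm but not a FUNTF, yet has strictly smaller value than the FUNTF
`(x_j, x_j^*)`. -/
theorem alternative_frame_potential_fails :
    (∀ j, ‖zv j‖ = 1) ∧ (∀ j, ‖zf j‖ = 1) ∧ (∀ j, pair2 (zf j) (zv j) = 1) ∧
    (¬ ∃ c : ℝ, ∀ v : L1two, ∑ j, pair2 (zf j) v • zv j = c • v) ∧
    (∑ j, ∑ k, |pair2 (zf j) (zv k) * pair2 (zf k) (zv j)| = 4) ∧
    (∑ j, ∑ k, |pair2 (xf j) (xv k) * pair2 (xf k) (xv j)| = 9/2) ∧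
    (4 : ℝ) < 9/2 := by
  refine ⟨norm_zv, norm_zf, fun j => ?_, not_exists_sum_pair2_zf_smul_zv_eq_smul,
    sum_abs_pair2_zf_zv, sum_abs_pair2_xf_xv, by norm_num⟩
  fin_cases j <;> norm_num [pair2_zf_zv]
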